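/- Let d ≥ 3 be an integer such that both d and (d−1)/2 are odd. Then the set of extreme points of Ξ is exactly 𝒱, i.e., the set of extreme points of the convex hull of 𝒱 equals 𝒱. -/

import Mathlib

open Set Pointwise

noncomputable section

variable (d : ℕ)

/-- The vertices of the hypercube `[0,1]^d`. -/
def cubeVerts : Set (Fin d → ℝ) := {x | ∀ i, x i = 0 ∨ x i = 1}

/-- The set `𝒞` of centers of the `(d-1)/2`-dimensional faces of `[0,1]^d`: points with
exactly `(d-1)/2` coordinates equal to `1/2` and all remaining coordinates in `{0,1}`. -/
def centerSet : Set (Fin d → ℝ) :=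
  {x | (∀ i, x i = 0 ∨ x i = 1/2 ∨ x i = 1) ∧ {i | x i = 1/2}.ncard = (d - 1) / 2}

/-- The slab `L` bounded by the hyperplanes `H_{(d-1)/2}` and `H_{(d+1)/2}`. -/
def slabL : Set (Fin d → ℝ) :=
  {x | ((d : ℝ) - 1) / 2 ≤ ∑ i, x i ∧ ∑ i, x i ≤ ((d : ℝ) + 1) / 2}

/-- The set `𝒱 = (𝒞 ∖ L) ∪ ({0,1}^d ∩ L)`. -/
def vSet : Set (Fin d → ℝ) := (centerSet d \ slabL d) ∪ (cubeVerts d ∩ slabL d)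

/-- The polytope `Ξ`, the convex hull of `𝒱`. -/
def Xi : Set (Fin d → ℝ) := convexHull ℝ (vSet d)

/-!
Every point of `𝒱` is exposed in `𝒱` by a linear functional, hence is extreme in `Ξ`. A cube
vertex is exposed by its face functional (`faceNormal`). For a centre `v ∉ L`, the points of `𝒱`
on the face of `v` other than `v` are cube vertices in `L`: a centre on that face has its
`1/2`-coordinates among those of `v`, and as many of them. So a large multiple of the face
functional plus the functional `±∑ uᵢ` separating `v` from `L` exposes `v`.
-/

section ConvexHull

variable {𝕜 E : Type*} [Field 𝕜] [LinearOrder 𝕜] [IsStrictOrderedRing 𝕜] [AddCommGroup E]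
  [Module 𝕜 E]

theorem convex_setOf_lt_or_eq (f : E →ₗ[𝕜] 𝕜) (x : E) : Convex 𝕜 {y | f y < f x ∨ y = x} := by
  refine convex_iff_pairwise_pos.2 fun y hy z hz hyz a b ha hb hab => Or.inl ?_
  have hle : ∀ w ∈ {y | f y < f x ∨ y = x}, f w ≤ f x := by
    rintro w (hw | rfl)
    exacts [hw.le, le_rfl]
  have hfx : f x = a * f x + b * f x := by rw [← add_mul, hab, one_mul]
  rw [map_add, map_smul, map_smul, smul_eq_mul, smul_eq_mul]
  rcases hy with hy | rfl
  · linarith [mul_lt_mul_of_pos_left hy ha, mul_le_mul_of_nonneg_left (hle z hz) hb.le]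
  · rcases hz with hz | rfl
    · linarith [mul_lt_mul_of_pos_left hz hb]
    · exact absurd rfl hyz

theorem mem_extremePoints_convexHull_of_lt {s : Set E} {x : E} (f : E →ₗ[𝕜] 𝕜) (hx : x ∈ s)
    (h : ∀ y ∈ s, y ≠ x → f y < f x) : x ∈ (convexHull 𝕜 s).extremePoints 𝕜 := by
  have hhull : convexHull 𝕜 s ⊆ {y | f y < f x ∨ y = x} :=
    convexHull_min (fun y hy => (eq_or_ne y x).elim Or.inr (Or.inl ∘ h y hy))
      (convex_setOf_lt_or_eq f x)
  have hsdiff : convexHull 𝕜 s \ {x} = convexHull 𝕜 s ∩ {y | f y < f x} := by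
    ext y
    constructor
    · rintro ⟨hy, hyx⟩
      exact ⟨hy, (hhull hy).resolve_right hyx⟩
    · rintro ⟨hy, hfy⟩
      exact ⟨hy, fun hyx => hfy.ne (by rw [hyx])⟩
  rw [(convex_convexHull 𝕜 s).mem_extremePoints_iff_convex_sdiff, hsdiff]
  exact ⟨subset_convexHull 𝕜 s hx,
    (convex_convexHull 𝕜 s).inter (convex_halfSpace_lt f.isLinear (f x))⟩

end ConvexHull

def halfGrid (ι : Type*) : Set (ι → ℝ) := {x | ∀ i, x i = 0 ∨ x i = 1/2 ∨ x i = 1}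

section HalfGrid

variable {ι : Type*}

/-- For `v ∈ halfGrid ι`, the functional `u ↦ faceNormal v ⬝ᵥ u` is maximised on `halfGrid ι`
exactly at the points that agree with `v` on its `0`/`1` coordinates, i.e. on the face of the
cube whose centre is `v`, and drops by at least `1/2` everywhere else. -/
def faceNormal (v : ι → ℝ) : ι → ℝ := fun i => 2 * v i - 1

lemma two_mul_sub_one_mul_sub_nonneg {a b : ℝ} (ha : a = 0 ∨ a = 1/2 ∨ a = 1)
    (hb : b = 0 ∨ b = 1/2 ∨ b = 1) : 0 ≤ (2 * b - 1) * (b - a) := by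
  rcases ha with rfl | rfl | rfl <;> rcases hb with rfl | rfl | rfl <;> norm_num

lemma half_le_two_mul_sub_one_mul_sub {a b : ℝ} (ha : a = 0 ∨ a = 1/2 ∨ a = 1)
    (hb : b = 0 ∨ b = 1/2 ∨ b = 1) (hb' : b ≠ 1/2) (hab : a ≠ b) :
    1/2 ≤ (2 * b - 1) * (b - a) := by
  rcases ha with rfl | rfl | rfl <;> rcases hb with rfl | rfl | rfl <;> norm_num at *

variable [Fintype ι] {u v : ι → ℝ}

lemma faceNormal_dotProduct_sub (u v : ι → ℝ) :
    faceNormal v ⬝ᵥ v - faceNormal v ⬝ᵥ u = ∑ i, (2 * v i - 1) * (v i - u i) := by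
  rw [← dotProduct_sub]
  simp only [dotProduct, faceNormal, Pi.sub_apply]

lemma faceNormal_dotProduct_le (hu : u ∈ halfGrid ι) (hv : v ∈ halfGrid ι) :
    faceNormal v ⬝ᵥ u ≤ faceNormal v ⬝ᵥ v := by
  rw [← sub_nonneg, faceNormal_dotProduct_sub]
  exact Finset.sum_nonneg fun i _ => two_mul_sub_one_mul_sub_nonneg (hu i) (hv i)

lemma faceNormal_dotProduct_add_half_le (hu : u ∈ halfGrid ι) (hv : v ∈ halfGrid ι) {i : ι}
    (hvi : v i ≠ 1/2) (hi : u i ≠ v i) : faceNormal v ⬝ᵥ u + 1/2 ≤ faceNormal v ⬝ᵥ v := by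
  rw [← le_sub_iff_add_le', faceNormal_dotProduct_sub]
  calc (1/2 : ℝ) ≤ (2 * v i - 1) * (v i - u i) :=
        half_le_two_mul_sub_one_mul_sub (hu i) (hv i) hvi hi
    _ ≤ ∑ j, (2 * v j - 1) * (v j - u j) :=
      Finset.single_le_sum (fun j _ => two_mul_sub_one_mul_sub_nonneg (hu j) (hv j))
        (Finset.mem_univ i)

lemma sum_mem_Icc_of_mem_halfGrid (hu : u ∈ halfGrid ι) :
    0 ≤ ∑ i, u i ∧ ∑ i, u i ≤ Fintype.card ι := by
  have hIcc : ∀ i, 0 ≤ u i ∧ u i ≤ 1 := fun i => by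
    rcases hu i with h | h | h <;> rw [h] <;> norm_num
  refine ⟨Finset.sum_nonneg fun i _ => (hIcc i).1, ?_⟩
  simpa using Finset.sum_le_sum fun i (_ : i ∈ Finset.univ) => (hIcc i).2

end HalfGrid

lemma eq_of_forall_ne_half_eq_of_ncard_le {ι : Type*} [Finite ι] {u v : ι → ℝ}
    (h : ∀ i, v i ≠ 1/2 → u i = v i)
    (hcard : {i | v i = 1/2}.ncard ≤ {i | u i = 1/2}.ncard) : u = v := by
  have hsub : {i | u i = 1/2} ⊆ {i | v i = 1/2} := fun i hui => by
    by_contra hvi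
    exact hvi ((h i hvi).symm.trans hui)
  have hhalves := Set.eq_of_subset_of_ncard_le hsub hcard
  funext i
  by_cases hvi : v i = 1/2
  · have hui : i ∈ {i | u i = 1/2} := hhalves ▸ hvi
    exact hui.trans hvi.symm
  · exact h i hvi

variable {d}

lemma vSet_subset_halfGrid : vSet d ⊆ halfGrid (Fin d) := by
  rintro u (hu | hu) i
  · exact hu.1.1 i
  · rcases hu.1 i with h | h
    exacts [Or.inl h, Or.inr (Or.inr h)]

lemma faceNormal_dotProduct_lt_of_mem_cubeVerts {u v : Fin d → ℝ} (hv : v ∈ cubeVerts d)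
    (hu : u ∈ halfGrid (Fin d)) (hne : u ≠ v) : faceNormal v ⬝ᵥ u < faceNormal v ⬝ᵥ v := by
  obtain ⟨i, hi⟩ := Function.ne_iff.1 hne
  have hv' : v ∈ halfGrid (Fin d) := fun j => (hv j).imp_right Or.inr
  have hvi : v i ≠ 1/2 := by rcases hv i with h | h <;> norm_num [h]
  linarith [faceNormal_dotProduct_add_half_le hu hv' hvi hi]

lemma exists_mul_sum_lt_of_notMem_slabL {v : Fin d → ℝ} (hv : v ∉ slabL d) :
    ∃ c : ℝ, (c = 1 ∨ c = -1) ∧ ∀ u ∈ slabL d, c * ∑ i, u i < c * ∑ i, v i := by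
  simp only [slabL, mem_ofPred_eq, not_and_or, not_le] at hv
  rcases hv with hv | hv
  · exact ⟨-1, Or.inr rfl, fun u hu => by linarith [hu.1]⟩
  · exact ⟨1, Or.inl rfl, fun u hu => by linarith [hu.2]⟩

lemma exists_dotProduct_lt_of_mem_centerSet_diff_slabL {v : Fin d → ℝ}
    (hv : v ∈ centerSet d \ slabL d) :
    ∃ a : Fin d → ℝ, ∀ u ∈ vSet d, u ≠ v → a ⬝ᵥ u < a ⬝ᵥ v := by
  obtain ⟨c, hc, hslab⟩ := exists_mul_sum_lt_of_notMem_slabL hv.2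
  -- Off the face of `v` the face functional loses at least `1/2`, while `c * ∑ uᵢ` varies by
  -- at most `d` on `[0, 1]^d`: hence the weight `2 * d + 1`.
  refine ⟨(2 * d + 1 : ℝ) • faceNormal v + c • 1, fun u hu hne => ?_⟩
  simp only [add_dotProduct, smul_dotProduct, one_dotProduct, smul_eq_mul]
  have hu' := vSet_subset_halfGrid hu
  have hv' : v ∈ halfGrid (Fin d) := hv.1.1
  by_cases hagree : ∀ i, v i ≠ 1/2 → u i = v i
  · have hsum : c * ∑ i, u i < c * ∑ i, v i := by
      rcases hu with hu | hu
      · exact absurd (eq_of_forall_ne_half_eq_of_ncard_le hagree (by rw [hu.1.2, hv.1.2])) hne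
      · exact hslab u hu.2
    have := mul_le_mul_of_nonneg_left (faceNormal_dotProduct_le hu' hv')
      (by positivity : (0 : ℝ) ≤ 2 * d + 1)
    linarith
  · push Not at hagree
    obtain ⟨i, hvi, hi⟩ := hagree
    have hgap := mul_le_mul_of_nonneg_left (faceNormal_dotProduct_add_half_le hu' hv' hvi hi)
      (by positivity : (0 : ℝ) ≤ 2 * d + 1)
    have hu_sum := sum_mem_Icc_of_mem_halfGrid hu'
    have hv_sum := sum_mem_Icc_of_mem_halfGrid hv'
    rw [Fintype.card_fin] at hu_sum hv_sum
    rcases hc with rfl | rfl <;> linarith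

lemma exists_dotProduct_lt_of_mem_vSet {v : Fin d → ℝ} (hv : v ∈ vSet d) :
    ∃ a : Fin d → ℝ, ∀ u ∈ vSet d, u ≠ v → a ⬝ᵥ u < a ⬝ᵥ v := by
  rcases hv with hv | hv
  · exact exists_dotProduct_lt_of_mem_centerSet_diff_slabL hv
  · exact ⟨faceNormal v, fun u hu hne =>
      faceNormal_dotProduct_lt_of_mem_cubeVerts hv.1 (vSet_subset_halfGrid hu) hne⟩

variable (d)

theorem extremePoints_Xi :
    Set.extremePoints ℝ (Xi d) = vSet d := by
  refine extremePoints_convexHull_subset.antisymm fun v hv => ?_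
  obtain ⟨a, ha⟩ := exists_dotProduct_lt_of_mem_vSet hv
  exact mem_extremePoints_convexHull_of_lt (dotProductBilin ℝ ℝ a) hv ha
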